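/- arXiv:1701.08044 — 3 statements merged into one kernel-verified Lean document; each statement's English description precedes it below -/
import Mathlib

section
/- The map ν sending π ∈ S_n to its stat table s₁s₂⋯sₙ is a bijection from S_n onto E_n = {w₁⋯wₙ : 0 ≤ w_i ≤ i-1}. -/
namespace BS

/-- `l` is (the one-line notation of) a permutation of `{1,...,n}`. -/
def isPerm (l : List ℕ) (n : ℕ) : Prop := l.Perm ((List.range n).map (· + 1))

/-- number of inversions -/
def inv (l : List ℕ) : ℕ :=
  ((Finset.range l.length ×ˢ Finset.range l.length).filter
    (fun p => p.1 < p.2 ∧ l.getD p.2 0 < l.getD p.1 0)).card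

/-- the set of (0-indexed) descent positions -/
def desSet (l : List ℕ) : Finset ℕ :=
  (Finset.range (l.length - 1)).filter (fun i => l.getD (i + 1) 0 < l.getD i 0)

def des (l : List ℕ) : ℕ := (desSet l).card

/-- major index: sum of the (1-indexed) descent positions -/
def maj (l : List ℕ) : ℕ := ∑ i ∈ desSet l, (i + 1)

/-- number of occurrences of the generalized pattern ac-b (132, first two letters adjacent) -/
def acb (l : List ℕ) : ℕ :=
  ((Finset.range l.length ×ˢ Finset.range l.length).filter
    (fun p => p.1 + 2 ≤ p.2 ∧ l.getD p.1 0 < l.getD p.2 0 ∧ l.getD p.2 0 < l.getD (p.1 + 1) 0)).card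

/-- number of occurrences of the generalized pattern ba-c (213, first two letters adjacent) -/
def bac (l : List ℕ) : ℕ :=
  ((Finset.range l.length ×ˢ Finset.range l.length).filter
    (fun p => p.1 + 2 ≤ p.2 ∧ l.getD (p.1 + 1) 0 < l.getD p.1 0 ∧ l.getD p.1 0 < l.getD p.2 0)).card

/-- number of occurrences of the generalized pattern cb-a (321, first two letters adjacent) -/
def cba (l : List ℕ) : ℕ :=
  ((Finset.range l.length ×ˢ Finset.range l.length).filter
    (fun p => p.1 + 2 ≤ p.2 ∧ l.getD p.2 0 < l.getD (p.1 + 1) 0 ∧ l.getD (p.1 + 1) 0 < l.getD p.1 0)).card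

/-- Babson–Steingrímsson's statistic stat = (ac-b)+(ba-c)+(cb-a)+(ba) -/
def stat (l : List ℕ) : ℕ := acb l + bac l + cba l + des l

/-- first letter -/
def F (l : List ℕ) : ℕ := l.headD 0

/-- insertion space `j` (i.e. between letters `j-1` and `j`, 0-indexed) is a descent space -/
def isDescSpace (σ : List ℕ) (j : ℕ) : Prop :=
  1 ≤ j ∧ j < σ.length ∧ σ.getD j 0 < σ.getD (j - 1) 0

instance (σ : List ℕ) (j : ℕ) : Decidable (isDescSpace σ j) := by
  unfold isDescSpace; infer_instance

def isAscSpace (σ : List ℕ) (j : ℕ) : Prop :=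
  1 ≤ j ∧ j < σ.length ∧ σ.getD (j - 1) 0 < σ.getD j 0

instance (σ : List ℕ) (j : ℕ) : Decidable (isAscSpace σ j) := by
  unfold isAscSpace; infer_instance

/-- maj-labeling of the insertion spaces `0,...,σ.length`: the final space gets `0`,
descent spaces get `1,...,des σ` from right to left, the remaining spaces get
`des σ + 1, ...` from left to right. -/
def majLabel (σ : List ℕ) (j : ℕ) : ℕ :=
  if j = σ.length then 0
  else if isDescSpace σ j then
    1 + ((Finset.Ico (j + 1) σ.length).filter (fun t => isDescSpace σ t)).card
  else des σ + 1 + ((Finset.range j).filter (fun t => ¬ isDescSpace σ t)).card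

/-- stat-labeling of the insertion spaces: descent spaces and the final space get
`0,...,des σ` from left to right, the initial space gets `des σ + 1`, and ascent
spaces get `des σ + 2, ...` from right to left. -/
def statLabel (σ : List ℕ) (j : ℕ) : ℕ :=
  if j = σ.length then des σ
  else if isDescSpace σ j then ((Finset.range j).filter (fun t => isDescSpace σ t)).card
  else if j = 0 then des σ + 1
  else des σ + 1 + ((Finset.Ico j σ.length).filter (fun t => isAscSpace σ t)).card

/-- index of the insertion space carrying label `i` in the labeling `lab` -/
def spaceOfLabel (lab : List ℕ → ℕ → ℕ) (σ : List ℕ) (i : ℕ) : ℕ :=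
  ((List.range (σ.length + 1)).find? (fun j => decide (lab σ j = i))).getD 0

/-- insert `v` at the space with inv-label `i` (spaces labeled from right to left) -/
def insertAtInvLabel (i : ℕ) (σ : List ℕ) (v : ℕ) : List ℕ :=
  σ.insertIdx (σ.length - i) v

def insertAtMajLabel (i : ℕ) (σ : List ℕ) (v : ℕ) : List ℕ :=
  σ.insertIdx (spaceOfLabel majLabel σ i) v

def insertAtStatLabel (i : ℕ) (σ : List ℕ) (v : ℕ) : List ℕ :=
  σ.insertIdx (spaceOfLabel statLabel σ i) v

/-- inversion table: `c_i` is the inv-label of the space of `π⁽ⁱ⁻¹⁾` that letter `i` occupies -/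
def invTable (π : List ℕ) : List ℕ :=
  (List.range π.length).map (fun k =>
    if k = 0 then 0
    else (π.filter (· ≤ k)).length - (π.filter (· ≤ k + 1)).idxOf (k + 1))

/-- major index table -/
def majTable (π : List ℕ) : List ℕ :=
  (List.range π.length).map (fun k =>
    if k = 0 then 0
    else majLabel (π.filter (· ≤ k)) ((π.filter (· ≤ k + 1)).idxOf (k + 1)))

/-- stat table -/
def statTable (π : List ℕ) : List ℕ :=
  (List.range π.length).map (fun k =>
    if k = 0 then 0
    else statLabel (π.filter (· ≤ k)) ((π.filter (· ≤ k + 1)).idxOf (k + 1)))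

/-- `w ∈ E_n`, i.e. `w = w₁⋯wₙ` with `0 ≤ wᵢ ≤ i - 1` -/
def memE (w : List ℕ) (n : ℕ) : Prop :=
  w.length = n ∧ ∀ k < n, w.getD k 0 ≤ k

/-- the map ρ : complement-reverse `π⁽ᵏ⁾` (k the first letter) behind its first letter,
then reinsert `k+1,…,n` at the maj-labels given by the stat table of `π`. -/
def rho (π : List ℕ) : List ℕ :=
  let n := π.length
  let k := π.headD 0
  let s := statTable π
  (List.range (n - k)).foldl
    (fun σ m => insertAtMajLabel (s.getD (k + m) 0) σ (k + m + 1))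
    (k :: (((π.filter (· ≤ k)).tail.map (fun x => k - x)).reverse))

/-- the finset of one-line notations of permutations of `{1,…,n}` -/
def perms (n : ℕ) : Finset (List ℕ) :=
  (((List.range n).map (· + 1)).permutations).toFinset

/-- the q-factorial `[n]_q!` -/
def qFact {R : Type*} [CommSemiring R] (q : R) (n : ℕ) : R :=
  ∏ k ∈ Finset.range n, ∑ j ∈ Finset.range (k + 1), q ^ j

end BS

/-!
Every permutation of `1, …, n + 1` arises in exactly one way by inserting `n + 1` into a
permutation `σ` of `1, …, n` at one of its `n + 1` spaces, and this appends the stat-label of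
the chosen space to the stat table of `σ`. By induction it therefore suffices that the
stat-labeling is a bijection from the spaces `0, …, n` of `σ` onto `0, …, n`. It is injective
because the labels of the descent spaces lie below `des σ`, increasing from left to right, the
final and initial spaces get `des σ` and `des σ + 1`, and the labels of the ascent spaces lie
above `des σ + 1`, decreasing from left to right.
-/

namespace List

variable {α : Type*}

theorem filter_insertIdx_of_not {p : α → Bool} {v : α} (hv : p v = false) (l : List α) (j : ℕ) :
    (l.insertIdx j v).filter p = l.filter p := by
  induction l generalizing j with
  | nil => cases j <;> simp [hv]
  | cons a l ih => cases j <;> simp [List.filter_cons, hv, ih]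

theorem idxOf_insertIdx_of_notMem [BEq α] [LawfulBEq α] {v : α} {l : List α} (hv : v ∉ l)
    {j : ℕ} (hj : j ≤ l.length) : (l.insertIdx j v).idxOf v = j := by
  induction l generalizing j with
  | nil => simp_all
  | cons a l ih =>
    cases j with
    | zero => simp
    | succ j =>
      simp only [mem_cons, not_or] at hv
      simp [idxOf_cons_ne _ (Ne.symm hv.1), ih hv.2 (by simpa using hj)]

end List

theorem Finset.card_filter_lt_card_filter_of_subset {α : Type*} {p : α → Prop} [DecidablePred p]
    {s t : Finset α} (hst : s ⊆ t) {a : α} (hat : a ∈ t) (has : a ∉ s) (hp : p a) :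
    (s.filter p).card < (t.filter p).card :=
  Finset.card_lt_card <| (Finset.ssubset_iff_of_subset (Finset.filter_subset_filter p hst)).2
    ⟨a, Finset.mem_filter.2 ⟨hat, hp⟩, fun h => has (Finset.mem_filter.1 h).1⟩

namespace BS

theorem isPerm_zero_iff {l : List ℕ} : isPerm l 0 ↔ l = [] := by
  simp [isPerm]

theorem map_succ_range_succ (n : ℕ) :
    (List.range (n + 1)).map (· + 1) = (List.range n).map (· + 1) ++ [n + 1] := by
  simp [List.range_succ]

namespace isPerm

variable {l : List ℕ} {n : ℕ}

theorem length_eq (h : isPerm l n) : l.length = n := by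
  simpa using List.Perm.length_eq h

theorem nodup (h : isPerm l n) : l.Nodup :=
  h.nodup_iff.2 <| List.nodup_range.map fun _ _ => Nat.succ.inj

theorem mem_iff (h : isPerm l n) {x : ℕ} : x ∈ l ↔ 1 ≤ x ∧ x ≤ n := by
  rw [List.Perm.mem_iff h]
  simp only [List.mem_map, List.mem_range]
  exact ⟨by omega, fun _ => ⟨x - 1, by omega, by omega⟩⟩

theorem succ_notMem (h : isPerm l n) : n + 1 ∉ l := by
  simp [h.mem_iff]

theorem filter_le_eq_self (h : isPerm l n) : l.filter (· ≤ n) = l :=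
  List.filter_eq_self.2 fun _ hx => by simpa using ((h.mem_iff).1 hx).2

theorem erase_succ (h : isPerm l (n + 1)) : isPerm (l.erase (n + 1)) n := by
  have hv : n + 1 ∉ (List.range n).map (· + 1) := by simp
  simpa [isPerm, map_succ_range_succ, List.erase_append_right _ hv] using h.erase (n + 1)

theorem insertIdx_succ (h : isPerm l n) {j : ℕ} (hj : j ≤ n) :
    isPerm (l.insertIdx j (n + 1)) (n + 1) := by
  refine (List.perm_insertIdx _ _ (h.length_eq ▸ hj)).trans ?_
  rw [map_succ_range_succ]
  exact (h.cons _).trans (List.perm_append_singleton _ _).symm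

theorem exists_insertIdx_eq (h : isPerm l (n + 1)) :
    ∃ σ, isPerm σ n ∧ ∃ j ≤ n, σ.insertIdx j (n + 1) = l := by
  have hmem : n + 1 ∈ l := h.mem_iff.2 ⟨by omega, le_rfl⟩
  have hidx : l.idxOf (n + 1) < l.length := List.idxOf_lt_length_iff.2 hmem
  refine ⟨l.erase (n + 1), h.erase_succ, l.idxOf (n + 1), by rw [h.length_eq] at hidx; omega, ?_⟩
  rw [List.erase_eq_eraseIdx_of_idxOf rfl]
  conv_lhs => enter [3]; rw [← List.getElem_idxOf hidx]
  exact List.insertIdx_eraseIdx_getElem hidx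

end isPerm

section statLabel

variable {σ : List ℕ} {j : ℕ}

theorem not_isDescSpace_of_isAscSpace (ha : isAscSpace σ j) : ¬ isDescSpace σ j :=
  fun hd => by have := hd.2.2; have := ha.2.2; omega

theorem isDescSpace_or_isAscSpace (hN : σ.Nodup) (h1 : 1 ≤ j) (h2 : j < σ.length) :
    isDescSpace σ j ∨ isAscSpace σ j := by
  have hne : σ[j] ≠ σ[j - 1] := fun h => by
    have := (hN.getElem_inj_iff).1 h
    omega
  unfold isDescSpace isAscSpace
  rw [List.getD_eq_getElem σ 0 h2, List.getD_eq_getElem σ 0 (by omega)]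
  omega

theorem des_eq_card_isDescSpace (σ : List ℕ) :
    des σ = ((Finset.range σ.length).filter (isDescSpace σ)).card := by
  refine Finset.card_nbij' (· + 1) (· - 1) ?_ ?_ ?_ ?_ <;> intro i hi <;>
    simp only [desSet, Finset.coe_filter, Finset.mem_range, Set.mem_ofPred_eq, isDescSpace] at hi ⊢
  · exact ⟨by omega, by omega, by omega, hi.2⟩
  · rw [Nat.sub_add_cancel hi.2.1]
    exact ⟨by omega, hi.2.2.2⟩
  · rfl
  · omega

theorem des_add_card_isAscSpace_lt (hσ : σ ≠ []) :
    des σ + ((Finset.range σ.length).filter (isAscSpace σ)).card < σ.length := by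
  have hasc : (Finset.range σ.length).filter (isAscSpace σ)
      ⊂ (Finset.range σ.length).filter (fun t => ¬ isDescSpace σ t) := by
    refine (Finset.ssubset_iff_of_subset (Finset.monotone_filter_right _
      fun _ _ => not_isDescSpace_of_isAscSpace)).2 ⟨0, ?_, fun h => ?_⟩
    · simp [List.length_pos_iff.2 hσ, isDescSpace]
    · exact absurd (Finset.mem_filter.1 h).2.1 (by omega)
  have := Finset.card_filter_add_card_filter_not (s := Finset.range σ.length) (isDescSpace σ)
  rw [← des_eq_card_isDescSpace, Finset.card_range] at this
  have := Finset.card_lt_card hasc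
  omega

theorem statLabel_length (σ : List ℕ) : statLabel σ σ.length = des σ := by
  simp [statLabel]

theorem statLabel_zero (hσ : σ ≠ []) : statLabel σ 0 = des σ + 1 := by
  have h0 : ¬ isDescSpace σ 0 := fun h => absurd h.1 (by omega)
  simp [statLabel, h0, Ne.symm (List.length_pos_iff.2 hσ).ne']

theorem statLabel_of_isDescSpace (hd : isDescSpace σ j) :
    statLabel σ j = ((Finset.range j).filter (isDescSpace σ)).card := by
  simp [statLabel, hd, hd.2.1.ne]

theorem statLabel_of_isAscSpace (ha : isAscSpace σ j) :
    statLabel σ j = des σ + 1 + ((Finset.Ico j σ.length).filter (isAscSpace σ)).card := by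
  simp [statLabel, not_isDescSpace_of_isAscSpace ha, ha.2.1.ne, Nat.one_le_iff_ne_zero.1 ha.1]

theorem statLabel_lt_des (hd : isDescSpace σ j) : statLabel σ j < des σ := by
  rw [statLabel_of_isDescSpace hd, des_eq_card_isDescSpace]
  exact Finset.card_filter_lt_card_filter_of_subset (Finset.range_subset_range.2 hd.2.1.le)
    (Finset.mem_range.2 hd.2.1) (by simp) hd

theorem des_add_two_le_statLabel (ha : isAscSpace σ j) : des σ + 2 ≤ statLabel σ j := by
  rw [statLabel_of_isAscSpace ha]
  have : 0 < ((Finset.Ico j σ.length).filter (isAscSpace σ)).card :=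
    Finset.card_pos.2 ⟨j, Finset.mem_filter.2 ⟨Finset.mem_Ico.2 ⟨le_rfl, ha.2.1⟩, ha⟩⟩
  omega

theorem statLabel_le_length_of_isAscSpace (ha : isAscSpace σ j) : statLabel σ j ≤ σ.length := by
  rw [statLabel_of_isAscSpace ha]
  have := Finset.card_le_card <| Finset.filter_subset_filter (isAscSpace σ)
    (fun t (ht : t ∈ Finset.Ico j σ.length) => Finset.mem_range.2 (Finset.mem_Ico.1 ht).2)
  have := des_add_card_isAscSpace_lt (List.ne_nil_of_length_pos (j.zero_le.trans_lt ha.2.1))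
  omega

theorem statLabel_strictMonoOn : StrictMonoOn (statLabel σ) {j | isDescSpace σ j} :=
  fun j₁ hj₁ j₂ hj₂ hlt => by
    rw [statLabel_of_isDescSpace hj₁, statLabel_of_isDescSpace hj₂]
    exact Finset.card_filter_lt_card_filter_of_subset (Finset.range_subset_range.2 hlt.le)
      (Finset.mem_range.2 hlt) (by simp) hj₁

theorem statLabel_strictAntiOn : StrictAntiOn (statLabel σ) {j | isAscSpace σ j} :=
  fun j₁ hj₁ j₂ hj₂ hlt => by
    rw [statLabel_of_isAscSpace hj₁, statLabel_of_isAscSpace hj₂, add_lt_add_iff_left]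
    exact Finset.card_filter_lt_card_filter_of_subset (Finset.Ico_subset_Ico_left hlt.le)
      (Finset.mem_Ico.2 ⟨le_rfl, hj₁.2.1⟩) (by simp [hlt]) hj₁

theorem statLabel_cases (hN : σ.Nodup) (hσ : σ ≠ []) (hj : j ≤ σ.length) :
    (j = 0 ∧ statLabel σ j = des σ + 1) ∨ (j = σ.length ∧ statLabel σ j = des σ) ∨
      (isDescSpace σ j ∧ statLabel σ j < des σ) ∨ (isAscSpace σ j ∧ des σ + 2 ≤ statLabel σ j) := by
  rcases Nat.eq_zero_or_pos j with rfl | h0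
  · exact .inl ⟨rfl, statLabel_zero hσ⟩
  rcases hj.eq_or_lt with rfl | hlt
  · exact .inr <| .inl ⟨rfl, statLabel_length σ⟩
  rcases isDescSpace_or_isAscSpace hN h0 hlt with hd | ha
  · exact .inr <| .inr <| .inl ⟨hd, statLabel_lt_des hd⟩
  · exact .inr <| .inr <| .inr ⟨ha, des_add_two_le_statLabel ha⟩

theorem statLabel_mapsTo (hN : σ.Nodup) :
    Set.MapsTo (statLabel σ) (Set.Iic σ.length) (Set.Iic σ.length) := by
  intro j (hj : j ≤ σ.length)
  rcases eq_or_ne σ [] with rfl | hσ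
  · simp_all [statLabel, des, desSet]
  have := des_add_card_isAscSpace_lt hσ
  show statLabel σ j ≤ σ.length
  rcases statLabel_cases hN hσ hj with ⟨-, h⟩ | ⟨-, h⟩ | ⟨-, h⟩ | ⟨ha, -⟩
  · omega
  · omega
  · omega
  · exact statLabel_le_length_of_isAscSpace ha

theorem statLabel_injOn (hN : σ.Nodup) : Set.InjOn (statLabel σ) (Set.Iic σ.length) := by
  suffices ∀ j₁ j₂, j₁ < j₂ → j₂ ≤ σ.length → statLabel σ j₁ ≠ statLabel σ j₂ by
    intro j₁ (h₁ : j₁ ≤ σ.length) j₂ (h₂ : j₂ ≤ σ.length) heq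
    rcases lt_trichotomy j₁ j₂ with hlt | rfl | hgt
    exacts [absurd heq (this _ _ hlt h₂), rfl, absurd heq.symm (this _ _ hgt h₁)]
  intro j₁ j₂ hlt hj₂
  have hσ : σ ≠ [] := List.ne_nil_of_length_pos (by omega)
  rcases statLabel_cases hN hσ (hlt.le.trans hj₂) with ⟨h₁, e₁⟩ | ⟨h₁, e₁⟩ | ⟨h₁, e₁⟩ | ⟨h₁, e₁⟩ <;>
  rcases statLabel_cases hN hσ hj₂ with ⟨h₂, e₂⟩ | ⟨h₂, e₂⟩ | ⟨h₂, e₂⟩ | ⟨h₂, e₂⟩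
  all_goals first
    | omega
    | exact (statLabel_strictMonoOn h₁ h₂ hlt).ne
    | exact (statLabel_strictAntiOn h₁ h₂ hlt).ne'

theorem statLabel_bijOn (hN : σ.Nodup) :
    Set.BijOn (statLabel σ) (Set.Iic σ.length) (Set.Iic σ.length) :=
  ((Set.finite_Iic _).injOn_iff_bijOn_of_mapsTo (statLabel_mapsTo hN)).1 (statLabel_injOn hN)

end statLabel

theorem statTable_insertIdx {σ : List ℕ} {n j : ℕ} (hσ : isPerm σ n) (hj : j ≤ n) :
    statTable (σ.insertIdx j (n + 1)) = statTable σ ++ [statLabel σ j] := by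
  have hlen : (σ.insertIdx j (n + 1)).length = n + 1 := by
    rw [List.length_insertIdx_of_le_length (hσ.length_eq ▸ hj), hσ.length_eq]
  have hfilter {m : ℕ} (hm : m ≤ n) : (σ.insertIdx j (n + 1)).filter (· ≤ m) = σ.filter (· ≤ m) :=
    List.filter_insertIdx_of_not (p := (· ≤ m)) (decide_eq_false (by omega)) σ j
  unfold statTable
  rw [hlen, hσ.length_eq, List.range_succ, List.map_append, List.map_singleton]
  congr 1
  · refine List.map_congr_left fun k hk => ?_
    rw [hfilter (List.mem_range.1 hk).le, hfilter (List.mem_range.1 hk)]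
  · congr 1
    rcases Nat.eq_zero_or_pos n with rfl | hn
    · obtain rfl : j = 0 := by omega
      simp [List.length_eq_zero_iff.1 hσ.length_eq, statLabel, des, desSet]
    rw [if_neg hn.ne', hfilter le_rfl, hσ.filter_le_eq_self,
      (hσ.insertIdx_succ hj).filter_le_eq_self,
      List.idxOf_insertIdx_of_notMem hσ.succ_notMem (hσ.length_eq ▸ hj)]

theorem memE_zero_iff {w : List ℕ} : memE w 0 ↔ w = [] := by
  simp [memE]

theorem memE_append_singleton_iff {w : List ℕ} {a n : ℕ} :
    memE (w ++ [a]) (n + 1) ↔ memE w n ∧ a ≤ n := by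
  simp only [memE, List.length_append, List.length_singleton, Nat.add_right_cancel_iff]
  refine ⟨fun ⟨hw, hle⟩ => ⟨⟨hw, fun k hk => ?_⟩, ?_⟩, fun ⟨⟨hw, hle⟩, ha⟩ => ⟨hw, fun k hk => ?_⟩⟩
  · rw [← List.getD_append _ [a] _ _ (hw ▸ hk)]
    exact hle k (by omega)
  · simpa [List.getD_append_right _ _ _ _ hw.le, hw] using hle n (by omega)
  · rcases Nat.lt_succ_iff_lt_or_eq.1 hk with hk | rfl
    · rw [List.getD_append _ _ _ _ (hw ▸ hk)]
      exact hle k hk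
    · simpa [List.getD_append_right _ _ _ _ hw.le, hw] using ha

theorem statTable_bijOn_succ {n : ℕ}
    (ih : Set.BijOn statTable {l | isPerm l n} {w | memE w n}) :
    Set.BijOn statTable {l | isPerm l (n + 1)} {w | memE w (n + 1)} := by
  refine ⟨?_, ?_, ?_⟩
  · rintro π (hπ : isPerm π (n + 1))
    obtain ⟨σ, hσ, j, hj, rfl⟩ := hπ.exists_insertIdx_eq
    rw [Set.mem_ofPred_eq, statTable_insertIdx hσ hj, memE_append_singleton_iff]
    exact ⟨ih.mapsTo hσ, hσ.length_eq ▸ statLabel_mapsTo hσ.nodup (hσ.length_eq ▸ hj)⟩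
  · rintro π (hπ : isPerm π (n + 1)) π' (hπ' : isPerm π' (n + 1)) heq
    obtain ⟨σ, hσ, j, hj, rfl⟩ := hπ.exists_insertIdx_eq
    obtain ⟨σ', hσ', j', hj', rfl⟩ := hπ'.exists_insertIdx_eq
    rw [statTable_insertIdx hσ hj, statTable_insertIdx hσ' hj'] at heq
    obtain ⟨htable, hlabel⟩ := List.append_inj' heq rfl
    obtain rfl : σ = σ' := ih.injOn hσ hσ' htable
    obtain rfl : j = j' := statLabel_injOn hσ.nodup (hσ.length_eq ▸ hj) (hσ.length_eq ▸ hj')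
      (List.singleton_inj.1 hlabel)
    rfl
  · intro w (hw : memE w (n + 1))
    obtain ⟨w, a, rfl⟩ := (List.eq_nil_or_concat' w).resolve_left (by rintro rfl; simp [memE] at hw)
    obtain ⟨hw, ha⟩ := memE_append_singleton_iff.1 hw
    obtain ⟨σ, hσ, rfl⟩ := ih.surjOn hw
    obtain ⟨j, hj, rfl⟩ := (statLabel_bijOn hσ.nodup).surjOn (hσ.length_eq ▸ ha)
    exact ⟨_, hσ.insertIdx_succ (hσ.length_eq ▸ hj), statTable_insertIdx hσ (hσ.length_eq ▸ hj)⟩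

end BS

/-- the stat table is a bijection from Sₙ onto Eₙ. -/
theorem statTable_bijOn (n : ℕ) :
    Set.BijOn BS.statTable {l | BS.isPerm l n} {w | BS.memE w n} := by
  induction n with
  | zero =>
    simp only [BS.isPerm_zero_iff, BS.memE_zero_iff, Set.ofPred_eq_eq_singleton]
    exact Set.bijOn_singleton.2 rfl
  | succ n ih => exact BS.statTable_bijOn_succ ih
end

section
/- For every permutation p = p₁p₂⋯p_k of {1,...,k} with p₁ = k, one has (c̲-ba)p + (b-ca)p = (c̲-b-a̲)p + (b-ac)p, where c̲ means the occurrence must use the first letter p₁ and a̲ means the occurrence must use the last letter p_k. Equivalently, the multiset A ∪ B equals the multiset C ∪ D, where A = {p_i : p₁p_ip_{i+1} is a 321 pattern}, B = {p_i : p_ip_jp_{j+1} is a 231 pattern for some j > i} (with multiplicity), C = {p_i : p₁p_ip_k is a 321 pattern}, and D = {p_i : p_ip_jp_{j+1} is a 213 pattern for some j > i} (with multiplicity). -/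
private lemma split_prod (n : ℕ) (P : ℕ → ℕ → Prop) [∀ i j, Decidable (P i j)] :
    ((Finset.range n ×ˢ Finset.range n).filter (fun q => P q.1 q.2)).card
      = ∑ i ∈ Finset.range n, ∑ j ∈ Finset.range n, if P i j then 1 else 0 := by
  rw [Finset.card_filter, Finset.sum_product]

private lemma crossing (f : ℕ → Prop) [DecidablePred f] (a b : ℕ) (hab : a ≤ b) :
    (∑ j ∈ Finset.Ico a b, (if f j ∧ ¬ f (j + 1) then 1 else 0))
      + (if f b then 1 else 0)
    = (∑ j ∈ Finset.Ico a b, (if ¬ f j ∧ f (j + 1) then 1 else 0))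
      + (if f a then 1 else 0) := by
  induction b, hab using Nat.le_induction with
  | base => simp
  | succ b hab ih =>
    rw [Finset.sum_Ico_succ_top hab, Finset.sum_Ico_succ_top hab]
    by_cases h1 : f b <;> by_cases h2 : f (b + 1) <;>
      simp only [h1, h2, not_true, not_false_iff, and_true, and_false,
        true_and, false_and, if_true, if_false] at ih ⊢ <;> omega

/-- for p ∈ S_k with p₁ = k, (c̲-ba)p + (b-ca)p = (c̲-b-a̲)p + (b-ac)p,
all positions 0-indexed. -/
theorem pattern_count_identity (k : ℕ) (p : List ℕ)
    (hp : BS.isPerm p k) (hfirst : BS.F p = k) :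
    -- (c̲-ba): occurrences p₀ pᵢ pᵢ₊₁ of 3-21 using the first letter
    ((Finset.range p.length).filter (fun i =>
        1 ≤ i ∧ i + 1 < p.length ∧
        p.getD (i + 1) 0 < p.getD i 0 ∧ p.getD i 0 < p.getD 0 0)).card
    -- (b-ca): occurrences pᵢ pⱼ pⱼ₊₁ of 2-31
    + ((Finset.range p.length ×ˢ Finset.range p.length).filter (fun q =>
        q.1 < q.2 ∧ q.2 + 1 < p.length ∧
        p.getD (q.2 + 1) 0 < p.getD q.1 0 ∧ p.getD q.1 0 < p.getD q.2 0)).card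
    -- (c̲-b-a̲): occurrences p₀ pᵢ p_{last} of 3-2-1 using first and last letters
    = ((Finset.range p.length).filter (fun i =>
        1 ≤ i ∧ i + 1 < p.length ∧
        p.getD (p.length - 1) 0 < p.getD i 0 ∧ p.getD i 0 < p.getD 0 0)).card
    -- (b-ac): occurrences pᵢ pⱼ pⱼ₊₁ of 2-13
    + ((Finset.range p.length ×ˢ Finset.range p.length).filter (fun q =>
        q.1 < q.2 ∧ q.2 + 1 < p.length ∧
        p.getD q.2 0 < p.getD q.1 0 ∧ p.getD q.1 0 < p.getD (q.2 + 1) 0)).card := by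
  classical
  have hlen : p.length = k := by simpa using hp.length_eq
  have hnd : p.Nodup := hp.symm.nodup (by
    exact (List.nodup_range : (List.range k).Nodup).map (fun a b h => by omega))
  have hle' : ∀ m, p.getD m 0 ≤ k := by
    intro m
    by_cases hm : m < p.length
    · rw [List.getD_eq_getElem _ _ hm]
      have hmem : p[m] ∈ p := List.getElem_mem _
      have := hp.subset hmem
      simp only [List.mem_map, List.mem_range] at this
      obtain ⟨a, ha, h⟩ := this; omega
    · rw [List.getD_eq_default _ _ (by omega)]; omega
  have inj : ∀ a b, a < p.length → b < p.length → p.getD a 0 = p.getD b 0 → a = b := by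
    intro a b ha hb h
    rw [List.getD_eq_getElem _ _ ha, List.getD_eq_getElem _ _ hb] at h
    exact (hnd.getElem_inj_iff).mp h
  rcases Nat.eq_zero_or_pos k with hk | hk
  · subst hk
    have : p = [] := List.length_eq_zero_iff.mp hlen
    subst this; simp
  have hnpos : 0 < p.length := by omega
  have h0 : p.getD 0 0 = k := by
    obtain ⟨a, t, rfl⟩ := List.exists_cons_of_ne_nil (List.length_pos_iff.mp hnpos)
    simpa [BS.F] using hfirst
  have fact1 : ∀ i, 1 ≤ i → i < p.length → p.getD i 0 < p.getD 0 0 := by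
    intro i h1 h2
    have := hle' i
    have hne : p.getD i 0 ≠ p.getD 0 0 := fun h => by
      have := inj i 0 h2 hnpos h; omega
    omega
  set n := p.length with hn
  rw [split_prod n (fun a b => a < b ∧ b + 1 < n ∧
      p.getD (b + 1) 0 < p.getD a 0 ∧ p.getD a 0 < p.getD b 0),
    split_prod n (fun a b => a < b ∧ b + 1 < n ∧
      p.getD b 0 < p.getD a 0 ∧ p.getD a 0 < p.getD (b + 1) 0),
    Finset.card_filter, Finset.card_filter,
    ← Finset.sum_add_distrib, ← Finset.sum_add_distrib]
  apply Finset.sum_congr rfl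
  intro i hi
  simp only [Finset.mem_range] at hi
  by_cases h1 : 1 ≤ i
  swap
  · have hi0 : i = 0 := by omega
    subst hi0
    rw [if_neg (by omega), if_neg (by omega)]
    rw [Finset.sum_eq_zero, Finset.sum_eq_zero]
    · intro j hj
      rw [if_neg]
      rintro ⟨-, hj1, -, h4⟩
      have := hle' (j + 1); omega
    · intro j hj
      rw [if_neg]
      rintro ⟨hj0, -, -, h4⟩
      simp only [Finset.mem_range] at hj
      have := hle' j; omega
  by_cases h2 : i + 1 < n
  swap
  · rw [if_neg (by omega), if_neg (by omega)]
    rw [Finset.sum_eq_zero, Finset.sum_eq_zero] <;>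
    · intro j hj
      rw [if_neg]
      rintro ⟨hj1, hj2, -⟩
      omega
  -- main case
  have hne : ∀ j, j < n → j ≠ i → p.getD j 0 ≠ p.getD i 0 := by
    intro j hjn hji h
    exact hji (inj j i hjn (by omega) h)
  have key := crossing (fun j => p.getD i 0 ≤ p.getD j 0) i (n - 1) (by omega)
  rw [Finset.sum_eq_sum_Ico_succ_bot (show i < n - 1 by omega),
      Finset.sum_eq_sum_Ico_succ_bot (show i < n - 1 by omega)] at key
  rw [if_pos (show p.getD i 0 ≤ p.getD i 0 from le_rfl),
      if_neg (show ¬(¬ p.getD i 0 ≤ p.getD i 0 ∧ p.getD i 0 ≤ p.getD (i + 1) 0) from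
        fun h => h.1 le_rfl)] at key
  have hdown : ∑ j ∈ Finset.Ico (i + 1) (n - 1),
      (if p.getD i 0 ≤ p.getD j 0 ∧ ¬ p.getD i 0 ≤ p.getD (j + 1) 0 then 1 else 0)
      = ∑ j ∈ Finset.Ico (i + 1) (n - 1),
      (if p.getD (j + 1) 0 < p.getD i 0 ∧ p.getD i 0 < p.getD j 0 then 1 else 0) := by
    refine Finset.sum_congr rfl (fun j hj => ?_)
    simp only [Finset.mem_Ico] at hj
    have := hne j (by omega) (by omega)
    refine if_congr ?_ rfl rfl
    omega
  have hup : ∑ j ∈ Finset.Ico (i + 1) (n - 1),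
      (if ¬ p.getD i 0 ≤ p.getD j 0 ∧ p.getD i 0 ≤ p.getD (j + 1) 0 then 1 else 0)
      = ∑ j ∈ Finset.Ico (i + 1) (n - 1),
      (if p.getD j 0 < p.getD i 0 ∧ p.getD i 0 < p.getD (j + 1) 0 then 1 else 0) := by
    refine Finset.sum_congr rfl (fun j hj => ?_)
    simp only [Finset.mem_Ico] at hj
    have := hne (j + 1) (by omega) (by omega)
    refine if_congr ?_ rfl rfl
    omega
  rw [show (if p.getD i 0 ≤ p.getD i 0 ∧ ¬ p.getD i 0 ≤ p.getD (i + 1) 0 then (1:ℕ) else 0)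
      = (if ¬ p.getD i 0 ≤ p.getD (i + 1) 0 then (1:ℕ) else 0) from
    if_congr (by simp) rfl rfl] at key
  rw [hdown, hup] at key
  have hB : ∑ j ∈ Finset.range n,
      (if i < j ∧ j + 1 < n ∧ p.getD (j + 1) 0 < p.getD i 0 ∧ p.getD i 0 < p.getD j 0
        then 1 else 0)
      = ∑ j ∈ Finset.Ico (i + 1) (n - 1),
      (if p.getD (j + 1) 0 < p.getD i 0 ∧ p.getD i 0 < p.getD j 0 then 1 else 0) := by
    rw [← Finset.sum_subset (show Finset.Ico (i + 1) (n - 1) ⊆ Finset.range n by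
        intro x hx; simp only [Finset.mem_Ico] at hx; simp only [Finset.mem_range]; omega)]
    · refine Finset.sum_congr rfl (fun j hj => ?_)
      simp only [Finset.mem_Ico] at hj
      refine if_congr ?_ rfl rfl
      constructor
      · rintro ⟨-, -, h⟩; exact h
      · intro h; exact ⟨by omega, by omega, h⟩
    · intro j hj hj2
      simp only [Finset.mem_range] at hj
      simp only [Finset.mem_Ico, not_and, not_lt] at hj2
      rw [if_neg]; rintro ⟨a, b, -⟩; omega
  have hD : ∑ j ∈ Finset.range n,
      (if i < j ∧ j + 1 < n ∧ p.getD j 0 < p.getD i 0 ∧ p.getD i 0 < p.getD (j + 1) 0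
        then 1 else 0)
      = ∑ j ∈ Finset.Ico (i + 1) (n - 1),
      (if p.getD j 0 < p.getD i 0 ∧ p.getD i 0 < p.getD (j + 1) 0 then 1 else 0) := by
    rw [← Finset.sum_subset (show Finset.Ico (i + 1) (n - 1) ⊆ Finset.range n by
        intro x hx; simp only [Finset.mem_Ico] at hx; simp only [Finset.mem_range]; omega)]
    · refine Finset.sum_congr rfl (fun j hj => ?_)
      simp only [Finset.mem_Ico] at hj
      refine if_congr ?_ rfl rfl
      constructor
      · rintro ⟨-, -, h⟩; exact h
      · intro h; exact ⟨by omega, by omega, h⟩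
    · intro j hj hj2
      simp only [Finset.mem_range] at hj
      simp only [Finset.mem_Ico, not_and, not_lt] at hj2
      rw [if_neg]; rintro ⟨a, b, -⟩; omega
  rw [hB, hD]
  have hA : (if 1 ≤ i ∧ i + 1 < n ∧ p.getD (i + 1) 0 < p.getD i 0 ∧ p.getD i 0 < p.getD 0 0
      then 1 else 0) = (if ¬ p.getD i 0 ≤ p.getD (i + 1) 0 then (1:ℕ) else 0) := by
    refine if_congr ?_ rfl rfl
    have := fact1 i h1 (by omega)
    omega
  have hC : (if 1 ≤ i ∧ i + 1 < n ∧ p.getD (n - 1) 0 < p.getD i 0 ∧ p.getD i 0 < p.getD 0 0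
      then 1 else 0) = (if p.getD (n - 1) 0 < p.getD i 0 then (1:ℕ) else 0) := by
    refine if_congr ?_ rfl rfl
    have := fact1 i h1 (by omega)
    omega
  rw [hA, hC]
  have hlast := hne (n - 1) (by omega) (by omega)
  by_cases hca : p.getD (n - 1) 0 < p.getD i 0
  · rw [if_pos hca]
    rw [if_neg (show ¬ p.getD i 0 ≤ p.getD (n - 1) 0 by omega)] at key
    omega
  · rw [if_neg hca]
    rw [if_pos (show p.getD i 0 ≤ p.getD (n - 1) 0 by omega)] at key
    omega
end

section
/- For every permutation π of {1,...,k} whose first letter is k, its complement-reversal σ defined by σ₁ = k and σ_j = k - π_{k+2-j} for 2 ≤ j ≤ k satisfies maj(σ) = stat(π) and des(σ) = des(π). -/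
private lemma sum_ite_le' (m n : ℕ) :
    ∑ t ∈ Finset.range n, (if m ≤ t then (1:ℤ) else 0) = ((n - m : ℕ) : ℤ) := by
  induction n with
  | zero => simp
  | succ n ih => rw [Finset.sum_range_succ, ih]; split_ifs with h <;> omega

private lemma sum_ite_lt' (g : ℕ → ℤ) (r n : ℕ) (h : r ≤ n) :
    ∑ t ∈ Finset.range n, (if t < r then g t else 0) = ∑ t ∈ Finset.range r, g t := by
  rw [← Finset.sum_subset (Finset.range_subset_range.2 h)
    (fun x _ hnx => by rw [if_neg]; simp only [Finset.mem_range] at hnx; omega)]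
  exact Finset.sum_congr rfl (fun x hx => if_pos (Finset.mem_range.1 hx))

/-- for π ∈ S_k starting with k, its complement-reversal σ
(σ₁ = k, σⱼ = k - π_{k+2-j}) satisfies maj(σ) = stat(π) and des(σ) = des(π). -/
theorem complement_reversal_maj_eq_stat (k : ℕ) (π : List ℕ)
    (hπ : BS.isPerm π k) (hfirst : BS.F π = k) :
    BS.maj (k :: ((π.tail.map (fun x => k - x)).reverse)) = BS.stat π ∧
    BS.des (k :: ((π.tail.map (fun x => k - x)).reverse)) = BS.des π := by
  classical
  unfold BS.isPerm at hπ
  have hlen : π.length = k := by simpa using hπ.length_eq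
  rcases Nat.lt_or_ge k 2 with hk2 | hk2
  · interval_cases k
    · have hnil : π = [] := List.length_eq_zero_iff.1 hlen
      subst hnil; decide
    · have hone : π = [1] := by
        have he : (List.range 1).map (fun x => x + 1) = [1] := by decide
        rw [he] at hπ
        exact List.perm_singleton.1 hπ
      subst hone; decide
  -- main case k ≥ 2
  have hgetD : ∀ i (hi : i < k), π.getD i 0 = π[i]'(hlen ▸ hi) := by
    intro i hi
    exact List.getD_eq_getElem π 0 (hlen ▸ hi)
  have hmem : ∀ i < k, 1 ≤ π.getD i 0 ∧ π.getD i 0 ≤ k := by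
    intro i hi
    rw [hgetD i hi]
    have hmem' : π[i]'(hlen ▸ hi) ∈ π := List.getElem_mem _
    have := hπ.mem_iff.1 hmem'
    simp only [List.mem_map, List.mem_range] at this
    obtain ⟨b, hb, hbe⟩ := this
    omega
  have hnd : π.Nodup := by
    refine hπ.nodup_iff.2 ?_
    exact List.Nodup.map (fun x y h => by omega) List.nodup_range
  have hinj : ∀ i < k, ∀ j < k, π.getD i 0 = π.getD j 0 → i = j := by
    intro i hi j hj h
    rw [hgetD i hi, hgetD j hj] at h
    exact (List.Nodup.getElem_inj_iff hnd).1 h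
  have h0 : π.getD 0 0 = k := by
    cases π with
    | nil => simp at hlen; omega
    | cons x l => simpa [BS.F] using hfirst
  have hd0 : π.getD 1 0 < π.getD 0 0 := by
    have h1 := (hmem 1 (by omega)).2
    have : π.getD 1 0 ≠ k := fun h => by
      have := hinj 1 (by omega) 0 (by omega) (by rw [h0]; exact h)
      omega
    omega
  set σ : List ℕ := k :: ((π.tail.map (fun x => k - x)).reverse) with hσdef
  have hσlen : σ.length = k := by
    simp only [hσdef, List.length_cons, List.length_reverse, List.length_map,
      List.length_tail, hlen]
    omega
  have hσ0 : σ.getD 0 0 = k := rfl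
  have hσget : ∀ j, 1 ≤ j → j < k → σ.getD j 0 = k - π.getD (k - j) 0 := by
    intro j hj1 hjk
    obtain ⟨m, rfl⟩ : ∃ m, j = m + 1 := ⟨j - 1, by omega⟩
    have hmlt : m < (π.tail.map (fun x => k - x)).reverse.length := by
      simp [List.length_tail, hlen]; omega
    rw [hσdef, List.getD_cons_succ, List.getD_eq_getElem _ 0 hmlt]
    rw [List.getElem_reverse]
    simp only [List.getElem_map, List.getElem_tail]
    have h1 : (π.tail.map (fun x => k - x)).length - 1 - m + 1 = k - (m + 1) := by
      simp [List.length_tail, hlen]; omega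
    have h2 : ∀ (i j : ℕ) (hi : i < π.length), i = j → π[i] = π.getD j 0 := by
      intro i j hi he
      subst he
      exact (List.getD_eq_getElem π 0 hi).symm
    congr 1
    exact h2 _ _ (by simp [List.length_tail, hlen]; omega) h1
  have hσdesc : ∀ i, 1 ≤ i → i < k - 1 →
      ((σ.getD (i+1) 0 < σ.getD i 0) ↔ (π.getD (k-i) 0 < π.getD (k-1-i) 0)) := by
    intro i hi1 hik
    rw [hσget i hi1 (by omega), hσget (i+1) (by omega) (by omega)]
    rw [show k - (i+1) = k-1-i from by omega]
    have hb1 := hmem (k-1-i) (by omega)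
    have hb2 := hmem (k-i) (by omega)
    omega
  -- the four basic range-(k-2) sums over descent positions j+1 of π
  -- maj of σ
  have hmajσ : BS.maj σ = 1 + ∑ j ∈ Finset.range (k-2),
      (if π.getD (j+1+1) 0 < π.getD (j+1) 0 then k - j - 1 else 0) := by
    unfold BS.maj BS.desSet
    rw [Finset.sum_filter, hσlen, show k - 1 = (k-2)+1 from by omega,
      Finset.sum_range_succ']
    have hterm0 : (if σ.getD (0+1) 0 < σ.getD 0 0 then (0:ℕ)+1 else 0) = 1 := by
      rw [if_pos]
      rw [hσget 1 le_rfl (by omega), hσ0]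
      have := hmem (k-1) (by omega)
      omega
    rw [hterm0, add_comm]
    congr 1
    rw [← Finset.sum_range_reflect
      (fun j => if π.getD (j+1+1) 0 < π.getD (j+1) 0 then k - j - 1 else 0) (k-2)]
    refine Finset.sum_congr rfl (fun i hi => ?_)
    rw [Finset.mem_range] at hi
    rw [show k-2-1-i+1+1 = k-(i+1) from by omega,
        show k-2-1-i+1 = k-1-(i+1) from by omega,
        show k-(k-2-1-i)-1 = i+1+1 from by omega]
    exact if_congr (hσdesc (i+1) (by omega) (by omega)) rfl rfl
  -- des of σ
  have hdesσ : BS.des σ = 1 + ∑ j ∈ Finset.range (k-2),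
      (if π.getD (j+1+1) 0 < π.getD (j+1) 0 then 1 else 0) := by
    unfold BS.des BS.desSet
    rw [Finset.card_filter, hσlen, show k - 1 = (k-2)+1 from by omega,
      Finset.sum_range_succ']
    have hterm0 : (if σ.getD (0+1) 0 < σ.getD 0 0 then 1 else 0) = 1 := by
      rw [if_pos]
      rw [hσget 1 le_rfl (by omega), hσ0]
      have := hmem (k-1) (by omega)
      omega
    rw [hterm0, add_comm]
    congr 1
    rw [← Finset.sum_range_reflect
      (fun j => if π.getD (j+1+1) 0 < π.getD (j+1) 0 then 1 else 0) (k-2)]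
    refine Finset.sum_congr rfl (fun i hi => ?_)
    rw [Finset.mem_range] at hi
    rw [show k-2-1-i+1+1 = k-(i+1) from by omega,
        show k-2-1-i+1 = k-1-(i+1) from by omega]
    exact if_congr (hσdesc (i+1) (by omega) (by omega)) rfl rfl
  -- des of π
  have hdesπ : BS.des π = 1 + ∑ j ∈ Finset.range (k-2),
      (if π.getD (j+1+1) 0 < π.getD (j+1) 0 then 1 else 0) := by
    unfold BS.des BS.desSet
    rw [Finset.card_filter, hlen, show k - 1 = (k-2)+1 from by omega,
      Finset.sum_range_succ']
    rw [if_pos hd0, add_comm]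
  refine ⟨?_, by rw [hdesσ, hdesπ]⟩
  -- now the maj = stat part, in ℤ
  have hpat : (BS.acb π + BS.bac π + BS.cba π : ℤ) =
      ∑ p ∈ Finset.range k ×ˢ Finset.range k,
        (if p.1 + 2 ≤ p.2 then
          ((if π.getD (p.1+1) 0 < π.getD p.1 0 then (1:ℤ) else 0)
            + (if π.getD p.2 0 < π.getD (p.1+1) 0 then 1 else 0)
            - (if π.getD p.2 0 < π.getD p.1 0 then 1 else 0))
        else 0) := by
    unfold BS.acb BS.bac BS.cba
    rw [hlen, Finset.card_filter, Finset.card_filter, Finset.card_filter]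
    push_cast
    rw [← Finset.sum_add_distrib, ← Finset.sum_add_distrib]
    refine Finset.sum_congr rfl (fun p hp => ?_)
    rw [Finset.mem_product, Finset.mem_range, Finset.mem_range] at hp
    by_cases hle : p.1 + 2 ≤ p.2
    · have hxz : π.getD p.1 0 ≠ π.getD p.2 0 := fun h => by
        have := hinj p.1 (by omega) p.2 (by omega) h; omega
      have hyz : π.getD (p.1+1) 0 ≠ π.getD p.2 0 := fun h => by
        have := hinj (p.1+1) (by omega) p.2 (by omega) h; omega
      have hxy : π.getD p.1 0 ≠ π.getD (p.1+1) 0 := fun h => by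
        have := hinj p.1 (by omega) (p.1+1) (by omega) h; omega
      simp only [hle, true_and, if_true]
      split_ifs <;> omega
    · simp [hle]
  -- split into the descent part and the telescoping part
  have hsplit : (BS.acb π + BS.bac π + BS.cba π : ℤ) =
      (∑ p ∈ Finset.range k ×ˢ Finset.range k,
        (if p.1 + 2 ≤ p.2 then
          (if π.getD (p.1+1) 0 < π.getD p.1 0 then (1:ℤ) else 0) else 0))
      + (∑ p ∈ Finset.range k ×ˢ Finset.range k,
        (if p.1 + 2 ≤ p.2 then
          ((if π.getD p.2 0 < π.getD (p.1+1) 0 then (1:ℤ) else 0)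
            - (if π.getD p.2 0 < π.getD p.1 0 then 1 else 0)) else 0)) := by
    rw [hpat, ← Finset.sum_add_distrib]
    refine Finset.sum_congr rfl (fun p _ => ?_)
    split_ifs <;> ring
  -- first part
  have hG1 : (∑ p ∈ Finset.range k ×ˢ Finset.range k,
        (if p.1 + 2 ≤ p.2 then
          (if π.getD (p.1+1) 0 < π.getD p.1 0 then (1:ℤ) else 0) else 0))
      = ∑ j ∈ Finset.range k,
          (if π.getD (j+1) 0 < π.getD j 0 then ((k - (j+2) : ℕ) : ℤ) else 0) := by
    rw [Finset.sum_product]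
    refine Finset.sum_congr rfl (fun j _ => ?_)
    by_cases hd : π.getD (j+1) 0 < π.getD j 0
    · simp only [if_pos hd]
      exact sum_ite_le' (j+2) k
    · simp only [if_neg hd, ite_self, Finset.sum_const_zero]
  -- evaluate the first part: peel the last and the first term
  have hG1' : (∑ j ∈ Finset.range k,
          (if π.getD (j+1) 0 < π.getD j 0 then ((k - (j+2) : ℕ) : ℤ) else 0))
      = ((k-2 : ℕ) : ℤ) + ∑ j ∈ Finset.range (k-2),
          (if π.getD (j+1+1) 0 < π.getD (j+1) 0 then ((k - (j+1+2) : ℕ) : ℤ) else 0) := by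
    have hlast : (if π.getD ((k-2)+1+1) 0 < π.getD ((k-2)+1) 0
        then ((k - ((k-2)+1+2) : ℕ) : ℤ) else 0) = 0 := by
      rw [show k - ((k-2)+1+2) = 0 from by omega]
      simp
    rw [show Finset.range k = Finset.range (((k-2)+1)+1) from by
        rw [show ((k-2)+1)+1 = k from by omega]]
    rw [Finset.sum_range_succ, hlast, add_zero, Finset.sum_range_succ',
      if_pos (show π.getD (0+1) 0 < π.getD 0 0 from hd0),
      show k - (0+2) = k - 2 from by omega, add_comm]
  -- second part: telescoping
  have hG2 : (∑ p ∈ Finset.range k ×ˢ Finset.range k,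
        (if p.1 + 2 ≤ p.2 then
          ((if π.getD p.2 0 < π.getD (p.1+1) 0 then (1:ℤ) else 0)
            - (if π.getD p.2 0 < π.getD p.1 0 then 1 else 0)) else 0))
      = ∑ t ∈ Finset.range k,
          ((if π.getD t 0 < π.getD (t-1) 0 then (1:ℤ) else 0)
            - (if π.getD t 0 < π.getD 0 0 then 1 else 0)) := by
    rw [Finset.sum_product_right]
    refine Finset.sum_congr rfl (fun t ht => ?_)
    have htk := Finset.mem_range.1 ht
    have step1 : ∀ j ∈ Finset.range k,
        (if j + 2 ≤ t then
          ((if π.getD t 0 < π.getD (j+1) 0 then (1:ℤ) else 0)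
            - (if π.getD t 0 < π.getD j 0 then 1 else 0)) else 0)
        = (if j < t - 1 then
          ((if π.getD t 0 < π.getD (j+1) 0 then (1:ℤ) else 0)
            - (if π.getD t 0 < π.getD j 0 then 1 else 0)) else 0) := by
      intro j _
      exact if_congr (by omega) rfl rfl
    rw [Finset.sum_congr rfl step1,
      sum_ite_lt' (fun j => (if π.getD t 0 < π.getD (j+1) 0 then (1:ℤ) else 0)
        - (if π.getD t 0 < π.getD j 0 then 1 else 0)) (t-1) k (by omega),
      Finset.sum_range_sub (fun j => if π.getD t 0 < π.getD j 0 then (1:ℤ) else 0) (t-1)]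
  -- evaluate the second part
  have hG2' : (∑ t ∈ Finset.range k,
          ((if π.getD t 0 < π.getD (t-1) 0 then (1:ℤ) else 0)
            - (if π.getD t 0 < π.getD 0 0 then 1 else 0)))
      = (1 + ∑ j ∈ Finset.range (k-2),
          (if π.getD (j+1+1) 0 < π.getD (j+1) 0 then (1:ℤ) else 0)) - ((k-1 : ℕ) : ℤ) := by
    rw [show Finset.range k = Finset.range ((k-1)+1) from by
        rw [show (k-1)+1 = k from by omega]]
    rw [Finset.sum_range_succ']
    have hterm0 : ((if π.getD 0 0 < π.getD (0-1) 0 then (1:ℤ) else 0)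
        - (if π.getD 0 0 < π.getD 0 0 then 1 else 0)) = 0 := by
      simp
    rw [hterm0, add_zero]
    have hcongr : ∀ t ∈ Finset.range (k-1),
        ((if π.getD (t+1) 0 < π.getD (t+1-1) 0 then (1:ℤ) else 0)
          - (if π.getD (t+1) 0 < π.getD 0 0 then 1 else 0))
        = (if π.getD (t+1) 0 < π.getD t 0 then (1:ℤ) else 0) - 1 := by
      intro t ht
      rw [Finset.mem_range] at ht
      rw [show t+1-1 = t from by omega]
      have hlt : π.getD (t+1) 0 < π.getD 0 0 := by
        have hb := (hmem (t+1) (by omega)).2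
        have hne : π.getD (t+1) 0 ≠ k := fun h => by
          have := hinj (t+1) (by omega) 0 (by omega) (by rw [h0]; exact h)
          omega
        rw [h0]
        omega
      rw [if_pos hlt]
    rw [Finset.sum_congr rfl hcongr, Finset.sum_sub_distrib, Finset.sum_const,
      Finset.card_range]
    rw [show Finset.range (k-1) = Finset.range ((k-2)+1) from by
        rw [show (k-2)+1 = k-1 from by omega]]
    rw [Finset.sum_range_succ',
      if_pos (show π.getD (0+1) 0 < π.getD 0 0 from hd0)]
    have hc1 : ((k-1 : ℕ) : ℤ) = ((k-2 : ℕ) : ℤ) + 1 := by omega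
    rw [nsmul_eq_mul]
    push_cast [hc1]
    ring
  -- assemble
  have hstat : (BS.stat π : ℤ) = (((k-2 : ℕ) : ℤ) + ∑ j ∈ Finset.range (k-2),
          (if π.getD (j+1+1) 0 < π.getD (j+1) 0 then ((k - (j+1+2) : ℕ) : ℤ) else 0))
      + ((1 + ∑ j ∈ Finset.range (k-2),
          (if π.getD (j+1+1) 0 < π.getD (j+1) 0 then (1:ℤ) else 0)) - ((k-1 : ℕ) : ℤ))
      + (1 + ∑ j ∈ Finset.range (k-2),
          (if π.getD (j+1+1) 0 < π.getD (j+1) 0 then (1:ℤ) else 0)) := by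
    have hdesZ : (BS.des π : ℤ) = 1 + ∑ j ∈ Finset.range (k-2),
        (if π.getD (j+1+1) 0 < π.getD (j+1) 0 then (1:ℤ) else 0) := by
      rw [hdesπ]
      push_cast
      rfl
    unfold BS.stat
    push_cast
    rw [show ((BS.acb π : ℤ) + BS.bac π + BS.cba π + BS.des π)
        = ((BS.acb π + BS.bac π + BS.cba π : ℕ) : ℤ) + (BS.des π : ℤ) from by push_cast; ring]
    rw [show ((BS.acb π + BS.bac π + BS.cba π : ℕ) : ℤ)
        = (BS.acb π : ℤ) + BS.bac π + BS.cba π from by push_cast; ring]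
    rw [hsplit, hG1, hG1', hG2, hG2', hdesZ]
  have hmajZ : (BS.maj σ : ℤ) = 1 + ∑ j ∈ Finset.range (k-2),
      (if π.getD (j+1+1) 0 < π.getD (j+1) 0 then ((k - j - 1 : ℕ) : ℤ) else 0) := by
    rw [hmajσ]
    push_cast
    rfl
  have hS : (∑ j ∈ Finset.range (k-2),
      (if π.getD (j+1+1) 0 < π.getD (j+1) 0 then ((k - j - 1 : ℕ) : ℤ) else 0))
      = (∑ j ∈ Finset.range (k-2),
          (if π.getD (j+1+1) 0 < π.getD (j+1) 0 then ((k - (j+1+2) : ℕ) : ℤ) else 0))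
        + 2 * (∑ j ∈ Finset.range (k-2),
          (if π.getD (j+1+1) 0 < π.getD (j+1) 0 then (1:ℤ) else 0)) := by
    rw [Finset.mul_sum, ← Finset.sum_add_distrib]
    refine Finset.sum_congr rfl (fun j hj => ?_)
    rw [Finset.mem_range] at hj
    split_ifs <;> omega
  have e1 : ((k-2 : ℕ) : ℤ) + 1 = ((k-1 : ℕ) : ℤ) := by omega
  suffices h : (BS.maj σ : ℤ) = (BS.stat π : ℤ) by exact_mod_cast h
  rw [hmajZ, hstat, hS]
  linarith [e1]
end
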